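/- Let P → X be a principal U(1)-bundle over a compact Kähler manifold X and A a connection on P. If there exists an equivariant map φ : P → ℂ, not identically zero, with iΛF_A − (i/2)|φ|² + iτ = 0, then τ > (2π/Vol(X))·deg_ω(P), where deg_ω(P) = (1/2π)∫_X iΛF_A dvol. -/

import Mathlib

/-!
Integrating `τ = c + ‖φ‖² / 2` over `X` gives `τ · Vol(X) - ∫ c = ½ ∫ ‖φ‖²`, and the right side is
positive because `‖φ‖²` is continuous, nonnegative and nonzero somewhere, hence positive on a
nonempty open set, which has positive measure.
-/

open MeasureTheory

theorem integral_norm_sq_pos {X E : Type*} [MeasurableSpace X] [TopologicalSpace X]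
    [OpensMeasurableSpace X] [CompactSpace X] [NormedAddCommGroup E]
    {μ : Measure X} [IsFiniteMeasure μ] [μ.IsOpenPosMeasure]
    {φ : X → E} (hφ : Continuous φ) {x₀ : X} (hx₀ : φ x₀ ≠ 0) :
    0 < ∫ x, ‖φ x‖ ^ 2 ∂μ :=
  (hφ.norm.pow 2).integral_pos_of_hasCompactSupport_nonneg_nonzero
    (.of_compactSpace _) (fun _ => sq_nonneg _) (by simpa using hx₀)

theorem integral_const_sub_div_measureReal_lt {X : Type*} [MeasurableSpace X]
    {μ : Measure X} [IsFiniteMeasure μ] [NeZero μ] {g : X → ℝ} (hg : Integrable g μ)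
    (hg_pos : 0 < ∫ x, g x ∂μ) (τ : ℝ) :
    (∫ x, (τ - g x) ∂μ) / μ.real Set.univ < τ := by
  have hvol : 0 < μ.real Set.univ := measureReal_univ_pos
  rw [integral_sub (integrable_const τ) hg, integral_const, smul_eq_mul, div_lt_iff₀ hvol]
  linarith

theorem bradlow_necessary_condition_general
    {X : Type*} [MeasurableSpace X] [TopologicalSpace X] [BorelSpace X]
    [CompactSpace X]
    (μ : Measure X) [IsFiniteMeasure μ] [μ.IsOpenPosMeasure]
    (c : X → ℝ)                        -- the function iΛF_A
    (φ : X → ℂ)                        -- the section φ (descended to X)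
    (hφ_cont : Continuous φ)
    (hφ_ne : ∃ x, φ x ≠ 0)             -- φ is not identically zero
    (τ : ℝ)
    (heq : ∀ x, τ - c x - ‖φ x‖ ^ 2 / 2 = 0)  -- real form of iΛF_A − (i/2)|φ|² + iτ = 0
    :
    τ > (2 * Real.pi / (μ Set.univ).toReal)
        * ((1 / (2 * Real.pi)) * ∫ x, c x ∂μ) := by
  obtain ⟨x₀, hx₀⟩ := hφ_ne
  have : Nonempty X := ⟨x₀⟩
  obtain rfl : c = fun x => τ - ‖φ x‖ ^ 2 / 2 := funext fun x => by linarith [heq x]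
  have hφ_sq_pos : 0 < ∫ x, ‖φ x‖ ^ 2 / 2 ∂μ := by
    rw [integral_div]
    exact half_pos (integral_norm_sq_pos hφ_cont hx₀)
  have hφ_sq_int : Integrable (fun x => ‖φ x‖ ^ 2 / 2) μ :=
    ((hφ_cont.norm.pow 2).div_const 2).integrable_of_hasCompactSupport (.of_compactSpace _)
  have h2π : 2 * Real.pi ≠ 0 := by positivity
  rw [← measureReal_def, div_mul_eq_mul_div, ← mul_assoc, mul_one_div_cancel h2π, one_mul]
  exact integral_const_sub_div_measureReal_lt hφ_sq_int hφ_sq_pos τ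

/-- Necessary direction of Bradlow's existence theorem for `τ`-vortices.
`X` is a compact Kähler manifold, abstracted as a compact topological space
with its (finite, positive-on-opens) volume measure.  The real function `c`
stands for `iΛF_A`, so that the real form of the moment map equation
`iΛF_A − (i/2)|φ|² + iτ = 0` reads `τ = c + |φ|²/2`, and the degree is
`deg_ω(P) = (1/2π) ∫_X iΛF_A dvol`.  If an equivariant `φ`, not identically
zero (descending to a continuous section), satisfies the equation, then
`τ > (2π/Vol(X))·deg_ω(P)`. -/
theorem bradlow_necessary_condition
    {X : Type*} [MeasurableSpace X] [TopologicalSpace X] [BorelSpace X]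
    [CompactSpace X]
    (μ : Measure X) [IsFiniteMeasure μ] [μ.IsOpenPosMeasure]
    (hVol : 0 < (μ Set.univ).toReal)
    (c : X → ℝ)                        -- the function iΛF_A
    (hc_int : Integrable c μ)
    (φ : X → ℂ)                        -- the section φ (descended to X)
    (hφ_cont : Continuous φ)
    (hφ_ne : ∃ x, φ x ≠ 0)             -- φ is not identically zero
    (τ : ℝ)
    (heq : ∀ x, τ - c x - ‖φ x‖ ^ 2 / 2 = 0)  -- real form of iΛF_A − (i/2)|φ|² + iτ = 0
    :
    τ > (2 * Real.pi / (μ Set.univ).toReal)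
        * ((1 / (2 * Real.pi)) * ∫ x, c x ∂μ) :=
  bradlow_necessary_condition_general μ c φ hφ_cont hφ_ne τ heq
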